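/- Suppose q_m > 0. Then, viewing A as a matrix over ℂ, the eigenvalue 1 of A has a one-dimensional eigenspace, and every eigenvalue λ of A with λ ≠ 1 satisfies |λ| < 1. -/

import Mathlib

/-!
The eigenvalue equation `A v = v` reads, row by row, `v (i+1) = v i - q i * v 0`, so an eigenvector
for `1` is determined by its first coordinate; since `A` is column-stochastic, `1` is an eigenvalue,
and its eigenspace is therefore a line. For the other eigenvalues, Gershgorin's theorem applied to
`Aᵀ` puts each of them in a disc with centre `A k k ≥ a > 0` and radius `1 - A k k`, which meets the
unit circle only at `1`.
-/

/-- The transition matrix of the exogenous innovation–imitation model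
(0-indexed: level `i : Fin m` corresponds to productivity level `i+1`). -/
def transMatrix (m : ℕ) (a : ℝ) (q : Fin m → ℝ) : Matrix (Fin m) (Fin m) ℝ :=
  fun i j =>
    (if (j : ℕ) = 0 then q i * (1 - a) else 0) +
    (if i = j then a else 0) +
    (if (j : ℕ) = (i : ℕ) + 1 then 1 - a else 0)

open Module Module.End Matrix

theorem Complex.norm_lt_one_of_norm_sub_ofReal_le {μ : ℂ} {d : ℝ} (hd : 0 < d)
    (h : ‖μ - d‖ ≤ 1 - d) (hμ : μ ≠ 1) : ‖μ‖ < 1 := by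
  by_contra! h1
  have hd1 : 0 ≤ 1 - d := (norm_nonneg _).trans h
  have hdist : (μ.re - d) ^ 2 + μ.im ^ 2 ≤ (1 - d) ^ 2 := by
    have := pow_le_pow_left₀ (norm_nonneg _) h 2
    rwa [Complex.sq_norm, Complex.normSq_apply, sub_re, sub_im, ofReal_re, ofReal_im, sub_zero,
      ← sq, ← sq] at this
  have hnorm : 1 ≤ μ.re ^ 2 + μ.im ^ 2 := by
    rw [sq, sq, ← Complex.normSq_apply, ← Complex.sq_norm]
    nlinarith
  have hre : μ.re = 1 := le_antisymm (by nlinarith [sq_nonneg μ.im]) (by nlinarith)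
  have him : μ.im = 0 := by nlinarith
  exact hμ (Complex.ext hre him)

namespace Matrix

variable {n K : Type*} [Fintype n] [DecidableEq n]

theorem hasEigenvalue_toLin'_transpose_iff [Field K] {A : Matrix n n K} {μ : K} :
    HasEigenvalue (toLin' Aᵀ) μ ↔ HasEigenvalue (toLin' A) μ := by
  simp only [hasEigenvalue_iff_isRoot_charpoly, charpoly_toLin', charpoly_transpose]

theorem hasEigenvalue_one_of_sum_col_eq_one [Field K] [Nonempty n] {A : Matrix n n K}
    (hA : ∀ j, ∑ i, A i j = 1) : HasEigenvalue (toLin' A) 1 := by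
  rw [← hasEigenvalue_toLin'_transpose_iff]
  refine hasEigenvalue_of_hasEigenvector (x := 1) ⟨?_, one_ne_zero⟩
  rw [mem_eigenspace_iff, toLin'_apply, one_smul]
  ext j
  simpa [mulVec, dotProduct] using hA j

theorem norm_lt_one_of_hasEigenvalue_of_mem_colStochastic {B : Matrix n n ℝ}
    (hB : B ∈ colStochastic ℝ n) (hdiag : ∀ i, 0 < B i i) {μ : ℂ} (hμ : HasEigenvalue (toLin' (B.map (Complex.ofReal ·))) μ) (h1 : μ ≠ 1) :
    ‖μ‖ < 1 := by
  rw [← hasEigenvalue_toLin'_transpose_iff, ← transpose_map] at hμ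
  obtain ⟨k, hk⟩ := eigenvalue_mem_ball hμ
  have hradius : ∑ j ∈ Finset.univ.erase k, ‖(Bᵀ.map (Complex.ofReal ·)) k j‖ = 1 - B k k := by
    simp only [map_apply, transpose_apply, Complex.norm_of_nonneg (hB.1 _ _)]
    rw [Finset.sum_erase_eq_sub (Finset.mem_univ k), sum_col_of_mem_colStochastic hB]
  rw [Metric.mem_closedBall, dist_eq_norm, hradius] at hk
  exact Complex.norm_lt_one_of_norm_sub_ofReal_le (hdiag k) hk h1

end Matrix

section transMatrix

variable {m : ℕ} {a : ℝ} {q : Fin m → ℝ}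

theorem transMatrix_nonneg (ha₀ : 0 ≤ a) (ha₁ : a ≤ 1) (hq : ∀ i, 0 ≤ q i) (i j : Fin m) :
    0 ≤ transMatrix m a q i j := by
  have := mul_nonneg (hq i) (sub_nonneg.2 ha₁)
  simp only [transMatrix]
  split_ifs <;> linarith

theorem transMatrix_apply_self_pos (ha₀ : 0 < a) (ha₁ : a ≤ 1) (hq : ∀ i, 0 ≤ q i)
    (i : Fin m) : 0 < transMatrix m a q i i := by
  have := mul_nonneg (hq i) (sub_nonneg.2 ha₁)
  simp only [transMatrix]
  split_ifs <;> linarith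

end transMatrix

section transMatrixSucc

variable {n : ℕ} {a : ℝ} {q : Fin (n + 1) → ℝ}

theorem transMatrix_sum_col (hq : ∑ i, q i = 1) (j : Fin (n + 1)) :
    ∑ i, transMatrix (n + 1) a q i j = 1 := by
  induction j using Fin.cases with
  | zero => simp [transMatrix, Finset.sum_add_distrib, ← Finset.sum_mul, hq]
  | succ k =>
    simp [transMatrix, Finset.sum_add_distrib, Fin.sum_univ_castSucc, Fin.val_inj, k.isLt.ne]

theorem transMatrix_mem_colStochastic (ha₀ : 0 ≤ a) (ha₁ : a ≤ 1) (hq : ∀ i, 0 ≤ q i)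
    (hqsum : ∑ i, q i = 1) : transMatrix (n + 1) a q ∈ colStochastic ℝ (Fin (n + 1)) :=
  mem_colStochastic_iff_sum.2 ⟨transMatrix_nonneg ha₀ ha₁ hq, transMatrix_sum_col hqsum⟩

theorem transMatrix_mulVec_castSucc (v : Fin (n + 1) → ℂ) (i : Fin n) :
    ((transMatrix (n + 1) a q).map (Complex.ofReal ·) *ᵥ v) i.castSucc =
      q i.castSucc * (1 - a) * v 0 + a * v i.castSucc + (1 - a) * v i.succ := by
  simp [transMatrix, mulVec, dotProduct, add_mul, apply_ite Complex.ofReal, ite_mul,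
    Finset.sum_add_distrib, ← Fin.val_succ, Fin.val_inj]

theorem eq_zero_of_mem_eigenspace_transMatrix_one (ha : a ≠ 1) {v : Fin (n + 1) → ℂ}
    (hv : v ∈ eigenspace (toLin' ((transMatrix (n + 1) a q).map (Complex.ofReal ·))) 1)
    (h0 : v 0 = 0) : v = 0 := by
  rw [mem_eigenspace_iff, toLin'_apply, one_smul] at hv
  have hstep (i : Fin n) : v i.succ = v i.castSucc := by
    have hrow := congrFun hv i.castSucc
    rw [transMatrix_mulVec_castSucc, h0] at hrow
    have hne : (1 - a : ℂ) ≠ 0 := sub_ne_zero.2 (by exact_mod_cast ha.symm)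
    exact mul_left_cancel₀ hne (by linear_combination hrow)
  funext i
  induction i using Fin.induction with
  | zero => exact h0
  | succ i ih => rw [hstep, ih]; rfl

theorem finrank_eigenspace_transMatrix_one (ha : a ≠ 1) (hqsum : ∑ i, q i = 1) :
    finrank ℂ (eigenspace (toLin' ((transMatrix (n + 1) a q).map (Complex.ofReal ·))) 1) = 1 := by
  apply le_antisymm
  · set E := eigenspace (toLin' ((transMatrix (n + 1) a q).map (Complex.ofReal ·))) 1
    have hinj : Function.Injective ((LinearMap.proj 0).comp E.subtype) := by
      rw [← LinearMap.ker_eq_bot, LinearMap.ker_eq_bot']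
      exact fun v hv => Subtype.ext (eq_zero_of_mem_eigenspace_transMatrix_one ha v.2 hv)
    simpa using LinearMap.finrank_le_finrank_of_injective hinj
  · rw [Submodule.one_le_finrank_iff]
    refine hasEigenvalue_one_of_sum_col_eq_one fun j => ?_
    simp only [map_apply, ← Complex.ofReal_sum, transMatrix_sum_col hqsum, Complex.ofReal_one]

end transMatrixSucc

/-- If `q_m > 0`, then over `ℂ` the eigenvalue `1` of `A` has a
one-dimensional eigenspace, and every other eigenvalue `λ` satisfies
`|λ| < 1`. -/
theorem stmt6 (m : ℕ) (hm : 1 ≤ m) (a : ℝ) (ha : a ∈ Set.Ioo (0 : ℝ) 1)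
    (q : Fin m → ℝ) (hq : ∀ i, q i ∈ Set.Icc (0 : ℝ) 1) (hqsum : ∑ i, q i = 1) :
    Module.finrank ℂ
        ↥(Module.End.eigenspace
            (Matrix.toLin' ((transMatrix m a q).map (Complex.ofReal ·))) 1) = 1 ∧
      ∀ μ : ℂ,
        Module.End.HasEigenvalue
            (Matrix.toLin' ((transMatrix m a q).map (Complex.ofReal ·))) μ →
          μ ≠ 1 → ‖μ‖ < 1 := by
  obtain ⟨n, rfl⟩ := Nat.exists_eq_add_of_le' hm
  have hq₀ (i : Fin (n + 1)) : 0 ≤ q i := (hq i).1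
  refine ⟨finrank_eigenspace_transMatrix_one ha.2.ne hqsum, fun μ hμ h1 => ?_⟩
  exact norm_lt_one_of_hasEigenvalue_of_mem_colStochastic
    (transMatrix_mem_colStochastic ha.1.le ha.2.le hq₀ hqsum)
    (transMatrix_apply_self_pos ha.1 ha.2.le hq₀) hμ h1
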